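/- arXiv:1402.0342 — 2 statements merged into one kernel-verified Lean document; each statement's English description precedes it below -/
import Mathlib

section
/- Define v⁺ = η(b↑b↓ + s⁺), v⁻ = η(b↑†b↓† − s⁻), l↑ = η(b↑†b↑ + 1/2 − s^z), l↓ = η(b↓†b↓ + 1/2 − s^z), with the bosonic and complex-spin operators as above. Then [v⁺, v⁻] = η(l↑ + l↓). -/
/-- The auxiliary space: (coefficient functions of) formal combinations of
basis vectors `|j,k,l⟩`, `j,k,l ∈ ℤ≥0`. -/
abbrev Aux := (ℕ × ℕ × ℕ) → ℂ

/-- A weighted-shift operator on the auxiliary space: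
`(shiftOp σ w f) p = w p * f (σ p)`. -/
noncomputable def shiftOp (σ : ℕ × ℕ × ℕ → ℕ × ℕ × ℕ) (w : ℕ × ℕ × ℕ → ℂ) :
    Module.End ℂ Aux where
  toFun f := fun p => w p * f (σ p)
  map_add' f g := by funext p; simp [mul_add]
  map_smul' c f := by funext p; simp [smul_eq_mul]; ring

/-- Bosonic annihilation operator `b↑`: `b↑|j,k,l⟩ = √j |j−1,k,l⟩`. -/
noncomputable def bUp : Module.End ℂ Aux :=
  shiftOp (fun p => (p.1 + 1, p.2.1, p.2.2)) (fun p => (Real.sqrt (p.1 + 1) : ℂ))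

/-- Bosonic creation operator `b↑†`: `b↑†|j,k,l⟩ = √(j+1) |j+1,k,l⟩`. -/
noncomputable def bUpDag : Module.End ℂ Aux :=
  shiftOp (fun p => (p.1 - 1, p.2.1, p.2.2)) (fun p => (Real.sqrt p.1 : ℂ))

/-- Bosonic annihilation operator `b↓`. -/
noncomputable def bDown : Module.End ℂ Aux :=
  shiftOp (fun p => (p.1, p.2.1 + 1, p.2.2)) (fun p => (Real.sqrt (p.2.1 + 1) : ℂ))

/-- Bosonic creation operator `b↓†`. -/
noncomputable def bDownDag : Module.End ℂ Aux :=
  shiftOp (fun p => (p.1, p.2.1 - 1, p.2.2)) (fun p => (Real.sqrt p.2.1 : ℂ))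

/-- Complex-spin raising operator: `s⁺|j,k,l⟩ = l |j,k,l−1⟩`. -/
noncomputable def sPlus : Module.End ℂ Aux :=
  shiftOp (fun p => (p.1, p.2.1, p.2.2 + 1)) (fun p => ((p.2.2 : ℂ) + 1))

/-- Complex-spin lowering operator with parameter `pp`:
`s⁻|j,k,l⟩ = (2p−l) |j,k,l+1⟩`. -/
noncomputable def sMinus (pp : ℂ) : Module.End ℂ Aux :=
  shiftOp (fun p => (p.1, p.2.1, p.2.2 - 1))
    (fun p => if p.2.2 = 0 then 0 else 2 * pp - ((p.2.2 - 1 : ℕ) : ℂ))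

/-- Complex-spin `z`-operator: `s^z|j,k,l⟩ = (p−l) |j,k,l⟩`. -/
noncomputable def sZ (pp : ℂ) : Module.End ℂ Aux :=
  shiftOp id (fun p => pp - (p.2.2 : ℂ))

/-- `t⁺ = b↑`. -/
noncomputable def tP : Module.End ℂ Aux := bUp
/-- `t⁻ = η b↑†`. -/
noncomputable def tM (η : ℂ) : Module.End ℂ Aux := η • bUpDag
/-- `u⁺ = η b↓`. -/
noncomputable def uP (η : ℂ) : Module.End ℂ Aux := η • bDown
/-- `u⁻ = b↓†`. -/
noncomputable def uM : Module.End ℂ Aux := bDownDag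
/-- `v⁺ = η (b↑ b↓ + s⁺)`. -/
noncomputable def vP (η : ℂ) : Module.End ℂ Aux := η • (bUp * bDown + sPlus)
/-- `v⁻ = η (b↑† b↓† − s⁻)`. -/
noncomputable def vM (η pp : ℂ) : Module.End ℂ Aux := η • (bUpDag * bDownDag - sMinus pp)
/-- `l↑ = η (b↑† b↑ + 1/2 − s^z)`. -/
noncomputable def lUp (η pp : ℂ) : Module.End ℂ Aux :=
  η • (bUpDag * bUp + (1 / 2 : ℂ) • (1 : Module.End ℂ Aux) - sZ pp)
/-- `l↓ = η (b↓† b↓ + 1/2 − s^z)`. -/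
noncomputable def lDown (η pp : ℂ) : Module.End ℂ Aux :=
  η • (bDownDag * bDown + (1 / 2 : ℂ) • (1 : Module.End ℂ Aux) - sZ pp)

/-- `[v⁺, v⁻] = η (l↑ + l↓)`. -/
theorem vPvM_comm (η pp : ℂ) :
    vP η * vM η pp - vM η pp * vP η = η • (lUp η pp + lDown η pp) := by
  have k1 : ∀ n : ℕ, ((Real.sqrt (1 + (n : ℝ)) : ℂ)) ^ 2 = ((1 + (n : ℝ) : ℝ) : ℂ) := by
    intro n; rw [← Complex.ofReal_pow, Real.sq_sqrt (by positivity)]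
  have k2 : ∀ n : ℕ, ((Real.sqrt (2 + (n : ℝ)) : ℂ)) ^ 2 = ((2 + (n : ℝ) : ℝ) : ℂ) := by
    intro n; rw [← Complex.ofReal_pow, Real.sq_sqrt (by positivity)]
  apply LinearMap.ext; intro f
  funext q
  obtain ⟨j, k, l⟩ := q
  simp only [vP, vM, lUp, lDown, bUp, bUpDag, bDown, bDownDag, sPlus, sMinus, sZ, shiftOp,
    Module.End.mul_apply, LinearMap.smul_apply, LinearMap.sub_apply, LinearMap.add_apply,
    Module.End.one_apply, LinearMap.coe_mk, AddHom.coe_mk, Pi.smul_apply, Pi.sub_apply,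
    Pi.add_apply, smul_eq_mul, id_eq, Nat.add_sub_cancel]
  cases j with
  | zero => cases k with
    | zero => cases l with
      | zero => simp [-mul_eq_mul_left_iff] <;> push_cast <;> ring_nf <;> (try simp only [k1, k2]) <;> push_cast <;> ring
      | succ l => simp [-mul_eq_mul_left_iff] <;> push_cast <;> ring_nf <;> (try simp only [k1, k2]) <;> push_cast <;> ring
    | succ k => cases l with
      | zero => simp [-mul_eq_mul_left_iff] <;> push_cast <;> ring_nf <;> (try simp only [k1, k2]) <;> push_cast <;> ring
      | succ l => simp [-mul_eq_mul_left_iff] <;> push_cast <;> ring_nf <;> (try simp only [k1, k2]) <;> push_cast <;> ring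
  | succ j => cases k with
    | zero => cases l with
      | zero => simp [-mul_eq_mul_left_iff] <;> push_cast <;> ring_nf <;> (try simp only [k1, k2]) <;> push_cast <;> ring
      | succ l => simp [-mul_eq_mul_left_iff] <;> push_cast <;> ring_nf <;> (try simp only [k1, k2]) <;> push_cast <;> ring
    | succ k => cases l with
      | zero => simp [-mul_eq_mul_left_iff] <;> push_cast <;> ring_nf <;> (try simp only [k1, k2]) <;> push_cast <;> ring
      | succ l => simp [-mul_eq_mul_left_iff] <;> push_cast <;> ring_nf <;> (try simp only [k1, k2]) <;> push_cast <;> ring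
end

section
/- With the representation as above, the mixed relations hold: [u⁺, v⁻] = η t⁻, [u⁻, v⁺] = −η t⁺, [t⁺, v⁻] = η u⁻, [t⁻, v⁺] = −η u⁺, and [u^±, v^±] = [t^±, v^±] = 0. -/
/-! All operators are weighted shifts of the coefficient functions, so products of them are again
weighted shifts. This gives the canonical commutation relations `[b↑, b↑†] = [b↓, b↓†] = 1`, and
shows that operators moving different indices commute. The mixed relations use nothing else:
expanding each bracket by `[x, y z] = [x, y] z + y [x, z]`, only `[b↓, b↓†]` or `[b↑, b↑†]`
survives. -/

attribute [local instance 100] LieRing.ofAssociativeRing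

theorem Ring.lie_mul {A : Type*} [Ring A] (x y z : A) : ⁅x, y * z⁆ = ⁅x, y⁆ * z + y * ⁅x, z⁆ := by
  simp only [Ring.lie_def, mul_sub, sub_mul, mul_assoc]
  abel

structure CCRWithSpin {A : Type*} [Ring A] (a a' b b' sp sm : A) : Prop where
  lie_a_a' : ⁅a, a'⁆ = 1
  lie_b_b' : ⁅b, b'⁆ = 1
  commute_a_b : Commute a b
  commute_a_b' : Commute a b'
  commute_a'_b : Commute a' b
  commute_a'_b' : Commute a' b'
  commute_a_sp : Commute a sp
  commute_a'_sp : Commute a' sp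
  commute_b_sp : Commute b sp
  commute_b'_sp : Commute b' sp
  commute_a_sm : Commute a sm
  commute_a'_sm : Commute a' sm
  commute_b_sm : Commute b sm
  commute_b'_sm : Commute b' sm

theorem CCRWithSpin.mixed_relations {R A : Type*} [CommRing R] [Ring A] [Algebra R A]
    {a a' b b' sp sm : A} (h : CCRWithSpin a a' b b' sp sm) (η : R) :
    ⁅η • b, η • (a' * b' - sm)⁆ = η • η • a' ∧
    ⁅b', η • (a * b + sp)⁆ = -η • a ∧
    ⁅a, η • (a' * b' - sm)⁆ = η • b' ∧
    ⁅η • a', η • (a * b + sp)⁆ = -η • η • b ∧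
    ⁅η • b, η • (a * b + sp)⁆ = 0 ∧
    ⁅b', η • (a' * b' - sm)⁆ = 0 ∧
    ⁅a, η • (a * b + sp)⁆ = 0 ∧
    ⁅η • a', η • (a' * b' - sm)⁆ = 0 := by
  have lie_a'_a : ⁅a', a⁆ = -1 := by rw [← lie_skew, h.lie_a_a']
  have lie_b'_b : ⁅b', b⁆ = -1 := by rw [← lie_skew, h.lie_b_b']
  -- `simp` does not find the instance arguments of `lie_smul` by unification here
  simp [lie_smul (R := R) (L := A) (M := A), Ring.lie_mul, h.lie_a_a', h.lie_b_b',
    lie_a'_a, lie_b'_b, Commute.lie_eq, h.commute_a_b, h.commute_a_b', h.commute_a'_b,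
    h.commute_a'_b', h.commute_a_b.symm, h.commute_a_b'.symm, h.commute_a'_b.symm,
    h.commute_a'_b'.symm, h.commute_a_sp, h.commute_a'_sp, h.commute_b_sp, h.commute_b'_sp,
    h.commute_a_sm, h.commute_a'_sm, h.commute_b_sm, h.commute_b'_sm]

@[simp]
lemma shiftOp_apply (σ : ℕ × ℕ × ℕ → ℕ × ℕ × ℕ) (w : ℕ × ℕ × ℕ → ℂ) (f : Aux) (p : ℕ × ℕ × ℕ) :
    shiftOp σ w f p = w p * f (σ p) := rfl

lemma commute_shiftOp {σ τ : ℕ × ℕ × ℕ → ℕ × ℕ × ℕ} {w v : ℕ × ℕ × ℕ → ℂ}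
    (hστ : ∀ p, σ (τ p) = τ (σ p)) (hw : ∀ p, w (τ p) = w p) (hv : ∀ p, v (σ p) = v p) :
    Commute (shiftOp σ w) (shiftOp τ v) := by
  ext f p
  simp only [Module.End.mul_apply, shiftOp_apply, hστ, hw, hv]
  ring

lemma ofReal_sqrt_mul_self {x : ℝ} (hx : 0 ≤ x) : (√x : ℂ) * √x = x := by
  rw [← Complex.ofReal_mul, Real.mul_self_sqrt hx]

lemma lie_bUp_bUpDag : ⁅bUp, bUpDag⁆ = 1 := by
  ext f ⟨j, k, l⟩
  cases j
  · simp [Ring.lie_def, bUp, bUpDag]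
  · simp only [bUp, bUpDag, Ring.lie_def, LinearMap.sub_apply, Module.End.mul_apply,
      Pi.sub_apply, shiftOp_apply, Nat.cast_add, Nat.cast_one, add_tsub_cancel_right, ← mul_assoc,
      Module.End.one_apply]
    rw [ofReal_sqrt_mul_self (by positivity), ofReal_sqrt_mul_self (by positivity)]
    push_cast
    ring

lemma lie_bDown_bDownDag : ⁅bDown, bDownDag⁆ = 1 := by
  ext f ⟨j, k, l⟩
  cases k
  · simp [Ring.lie_def, bDown, bDownDag]
  · simp only [bDown, bDownDag, Ring.lie_def, LinearMap.sub_apply, Module.End.mul_apply,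
      Pi.sub_apply, shiftOp_apply, Nat.cast_add, Nat.cast_one, add_tsub_cancel_right, ← mul_assoc,
      Module.End.one_apply]
    rw [ofReal_sqrt_mul_self (by positivity), ofReal_sqrt_mul_self (by positivity)]
    push_cast
    ring

theorem ccrWithSpin_ladderOps (pp : ℂ) :
    CCRWithSpin bUp bUpDag bDown bDownDag sPlus (sMinus pp) := by
  refine ⟨lie_bUp_bUpDag, lie_bDown_bDownDag, ?_, ?_, ?_, ?_, ?_, ?_, ?_, ?_, ?_, ?_, ?_, ?_⟩ <;>
    exact commute_shiftOp (fun _ => rfl) (fun _ => rfl) (fun _ => rfl)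

/-- Mixed relations: `[u⁺, v⁻] = η t⁻`, `[u⁻, v⁺] = −η t⁺`, `[t⁺, v⁻] = η u⁻`,
`[t⁻, v⁺] = −η u⁺`, and `[u^±, v^±] = [t^±, v^±] = 0`. -/
theorem mixed_relations (η pp : ℂ) :
    uP η * vM η pp - vM η pp * uP η = η • tM η ∧
    uM * vP η - vP η * uM = -η • tP ∧
    tP * vM η pp - vM η pp * tP = η • uM ∧
    tM η * vP η - vP η * tM η = -η • uP η ∧
    uP η * vP η - vP η * uP η = 0 ∧
    uM * vM η pp - vM η pp * uM = 0 ∧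
    tP * vP η - vP η * tP = 0 ∧
    tM η * vM η pp - vM η pp * tM η = 0 :=
  (ccrWithSpin_ladderOps pp).mixed_relations η
end
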